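/- Let G be a divisor on C of even degree with ½·deg G ≥ 2g. There exists a unique bijective correspondence between the set of k-equivalence classes of G-forms and the set of divisor classes (divisors modulo linear equivalence) of degree ½·deg G, with respect to which, for any G-form X and any divisor D of degree ½·deg G, the k-equivalence class of X corresponds to the divisor class of D if and only if X represents D. In particular, every G-form represents some divisor of degree ½·deg G, and two G-forms representing divisors D and D' are k-equivalent if and only if D and D' are linearly equivalent. -/

import Mathlib

/-- All 2×2 minors of a matrix vanish, i.e. the matrix has rank at most 1. -/
def MinorsVanish {R : Type} [CommRing R] {m n : Type} (M : Matrix m n R) : Prop :=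
  ∀ i i' j j', M i j * M i' j' = M i j' * M i' j

/-- A matrix is `k`-general if some row and some column each consist of
`k`-linearly independent entries. -/
def KGeneral (k : Type) [Field k] {V : Type} [AddCommMonoid V] [Module k V]
    {m n : Type} (M : Matrix m n V) : Prop :=
  (∃ i, LinearIndependent k fun j => M i j) ∧ ∃ j, LinearIndependent k fun i => M i j

/-- Two matrices over a `k`-algebra are `k`-equivalent if `Y = Φ X Ψ` for some
invertible square matrices `Φ`, `Ψ` with entries in `k`. -/
def KEquivalent (k : Type) [Field k] {A : Type} [CommRing A] [Algebra k A]
    {m n : Type} [Fintype m] [Fintype n] [DecidableEq m] [DecidableEq n]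
    (X Y : Matrix m n A) : Prop :=
  ∃ (Φ : Matrix m m k) (Ψ : Matrix n n k), IsUnit Φ.det ∧ IsUnit Ψ.det ∧
    Y = Φ.map (algebraMap k A) * X * Ψ.map (algebraMap k A)

/-- An abstraction of a nonsingular projective curve `C` of genus `g` over an
algebraically closed field `k`, packaged together with its function field `F = k(C)`,
the divisor `div f` of a nonzero rational function (divisors are finitely supported
`ℤ`-valued functions on the points of `C`), the Riemann–Roch spaces
`L(D) = {f : f = 0 ∨ div f + D ≥ 0}`, the rings `R_E` of functions regular near the
support of a divisor and the ideals `I_E` of functions vanishing to order at least `E`,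
subject to the standard facts about them (including the Riemann–Roch theorem). -/
structure AbstractCurve (k : Type) [Field k] : Type 1 where
  /-- the points of the curve -/
  Point : Type
  /-- the function field `k(C)` -/
  F : Type
  [fieldF : Field F]
  [algF : Algebra k F]
  /-- the genus of the curve -/
  genus : ℕ
  /-- `divOf f` is the divisor of zeros and poles of `f` (junk value `0` at `f = 0`);
  its value at a point `p` is the order of vanishing of `f` at `p`. -/
  divOf : F → (Point →₀ ℤ)
  divOf_mul : ∀ f g : F, f ≠ 0 → g ≠ 0 → divOf (f * g) = divOf f + divOf g
  divOf_algebraMap : ∀ c : k, c ≠ 0 → divOf (algebraMap k F c) = 0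
  divOf_eq_zero_iff : ∀ f : F, f ≠ 0 →
    (divOf f = 0 ↔ ∃ c : k, c ≠ 0 ∧ f = algebraMap k F c)
  /-- a principal divisor has degree zero -/
  deg_divOf : ∀ f : F, f ≠ 0 → (divOf f).sum (fun _ n => n) = 0
  /-- the Riemann–Roch space `L(D)` as a `k`-subspace of the function field -/
  RR : (Point →₀ ℤ) → Submodule k F
  mem_RR : ∀ (D : Point →₀ ℤ) (f : F), f ∈ RR D ↔ f = 0 ∨ 0 ≤ divOf f + D
  finite_RR : ∀ D : Point →₀ ℤ, Module.Finite k (RR D)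
  /-- the Riemann–Roch theorem: `ℓ(D) = deg D - g + 1` whenever `deg D > 2g - 2` -/
  rank_RR : ∀ D : Point →₀ ℤ, 2 * (genus : ℤ) - 2 < D.sum (fun _ n => n) →
    (Module.finrank k (RR D) : ℤ) = D.sum (fun _ n => n) - genus + 1
  /-- the `k`-space `R_E` of functions regular in a neighborhood of the support of `E` -/
  Reg : (Point →₀ ℤ) → Submodule k F
  mem_Reg : ∀ (E : Point →₀ ℤ) (f : F),
    f ∈ Reg E ↔ f = 0 ∨ ∀ p ∈ E.support, 0 ≤ divOf f p
  /-- the `k`-space `I_E ⊆ R_E` of functions vanishing to order at least `E` -/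
  VanishIdeal : (Point →₀ ℤ) → Submodule k F
  mem_VanishIdeal : ∀ (E : Point →₀ ℤ) (f : F),
    f ∈ VanishIdeal E ↔ f = 0 ∨ ∀ p ∈ E.support, E p ≤ divOf f p

namespace AbstractCurve

attribute [instance] fieldF algF

variable {k : Type} [Field k]

/-- The degree of a divisor. -/
def deg (C : AbstractCurve k) (D : C.Point →₀ ℤ) : ℤ := D.sum fun _ n => n

/-- Linear equivalence of divisors: `D ~ D'` iff `D' = D + div f` for some `f ≠ 0`. -/
def LinEquiv (C : AbstractCurve k) (D D' : C.Point →₀ ℤ) : Prop :=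
  ∃ f : C.F, f ≠ 0 ∧ D' = D + C.divOf f

/-- A `G`-form: a square matrix with entries in `L(G)`, all of whose 2×2 minors vanish,
and which is `k`-general.  (In context its size is `n = ½ deg G - g + 1`.) -/
def IsGForm (C : AbstractCurve k) (G : C.Point →₀ ℤ) {n : ℕ}
    (X : Matrix (Fin n) (Fin n) C.F) : Prop :=
  (∀ i j, X i j ∈ C.RR G) ∧ MinorsVanish X ∧ KGeneral k X

/-- The `G`-form `X` represents the divisor `D` (of degree `½ deg G`): `X = u v` where
the entries of the column vector `u` form a `k`-basis of `L(D)` and the entries of the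
row vector `v` form a `k`-basis of `L(G - D)`. -/
def Represents (C : AbstractCurve k) (G D : C.Point →₀ ℤ) {n : ℕ}
    (X : Matrix (Fin n) (Fin n) C.F) : Prop :=
  ∃ u v : Fin n → C.F,
    LinearIndependent k u ∧ Submodule.span k (Set.range u) = C.RR D ∧
    LinearIndependent k v ∧ Submodule.span k (Set.range v) = C.RR (G - D) ∧
    ∀ i j, X i j = u i * v j

/-- An `E`-compression functional `ρ : L(G) → k` (realized as a `k`-linear functional
on the function field): `ρ` kills `L(G - E)`, and for every divisor `D` of degree
`½ deg G` the induced pairing `(a, b) ↦ ρ(ab)` on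
`L(D)/L(D-E) × L(G-D)/L(G-D-E)` is a perfect pairing of `(deg E)`-dimensional
`k`-vector spaces (expressed by nondegeneracy on both sides together with both
quotients having dimension `deg E`). -/
def IsCompression (C : AbstractCurve k) (G E : C.Point →₀ ℤ) (ρ : C.F →ₗ[k] k) : Prop :=
  (∀ f ∈ C.RR (G - E), ρ f = 0) ∧
  ∀ D : C.Point →₀ ℤ, 2 * C.deg D = C.deg G →
    (∀ a ∈ C.RR D, (∀ b ∈ C.RR (G - D), ρ (a * b) = 0) → a ∈ C.RR (D - E)) ∧
    (∀ b ∈ C.RR (G - D), (∀ a ∈ C.RR D, ρ (a * b) = 0) → b ∈ C.RR (G - D - E)) ∧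
    (Module.finrank k
      (C.RR D ⧸ Submodule.comap (C.RR D).subtype (C.RR (D - E))) : ℤ) = C.deg E ∧
    (Module.finrank k
      (C.RR (G - D) ⧸
        Submodule.comap (C.RR (G - D)).subtype (C.RR (G - D - E))) : ℤ) = C.deg E

end AbstractCurve
namespace AbstractCurve

variable {k : Type} [Field k]

/-- `k`-equivalence, as a relation on the `G`-forms of size `n`. -/
def GFormEquiv (C : AbstractCurve k) (G : C.Point →₀ ℤ) (n : ℕ)
    (X Y : {X : Matrix (Fin n) (Fin n) C.F // C.IsGForm G X}) : Prop :=
  KEquivalent k X.1 Y.1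

/-- Linear equivalence, as a relation on the divisors of degree `s`. -/
def DivClassEquiv (C : AbstractCurve k) (s : ℤ)
    (D D' : {D : C.Point →₀ ℤ // C.deg D = s}) : Prop :=
  C.LinEquiv D.1 D'.1

end AbstractCurve

/-!
A `G`-form `X` has rank one, so `X = u v` with `u i = X i j₀ / X i₀ j₀` and `v = X i₀`.
Taking `D = sup_i (-div u_i)` puts every `u_i` in `L(D)` and every `v_j` in `L(G - D)`; as both
spaces then contain `n = s - g + 1 > g` independent functions, Riemann–Roch forces
`deg D = deg (G - D) = s`, and the two families are bases. Conversely, bases of `L(D)` and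
`L(G - D)` multiply to a `G`-form. Matrices representing a fixed `D` differ by changes of these
two bases, i.e. by `k`-equivalence. The factors of a rank-one matrix are determined up to a
scalar `c`, which moves `L(D)` to `L(D - div c)`, and in degree `s ≥ 2g` the space `L(D)`
determines `D`; so the divisors represented by `X` form one linear equivalence class.
-/

open Submodule Module Matrix

section RowCombination

variable {R V ι κ : Type*} [CommRing R] [AddCommGroup V] [Module R V] [Fintype ι] [Fintype κ]

theorem Fintype.linearCombination_comp_row (w : κ → V) (M : Matrix ι κ R) :
    Fintype.linearCombination R (Fintype.linearCombination R w ∘ M.row) =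
      Fintype.linearCombination R w ∘ₗ M.vecMulLinear := by
  ext c
  simp only [LinearMap.coe_comp, Function.comp_apply, vecMulLinear_apply, Matrix.row_apply',
    Fintype.linearCombination_apply, vecMul, dotProduct, Finset.smul_sum, Finset.sum_smul,
    smul_smul]
  exact Finset.sum_comm

variable [DecidableEq ι] {w : ι → V} {M : Matrix ι ι R}

theorem LinearIndependent.linearCombination_comp_row (hw : LinearIndependent R w)
    (hM : IsUnit M) : LinearIndependent R (Fintype.linearCombination R w ∘ M.row) := by
  rw [linearIndependent_iff_injective_fintypeLinearCombination,
    Fintype.linearCombination_comp_row, LinearMap.coe_comp]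
  exact hw.fintypeLinearCombination_injective.comp (vecMul_injective_of_isUnit hM)

theorem span_range_linearCombination_comp_row (hM : IsUnit M) :
    span R (Set.range (Fintype.linearCombination R w ∘ M.row)) = span R (Set.range w) := by
  rw [← Fintype.range_linearCombination, Fintype.linearCombination_comp_row, LinearMap.range_comp,
    LinearMap.range_eq_top.mpr (vecMul_surjective_iff_isUnit.mpr hM), Submodule.map_top,
    Fintype.range_linearCombination]

theorem LinearIndependent.exists_isUnit_eq_linearCombination_comp_row {w' : ι → V}
    (hw : LinearIndependent R w) (h : span R (Set.range w) = span R (Set.range w')) :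
    ∃ M : Matrix ι ι R, IsUnit M ∧ w' = Fintype.linearCombination R w ∘ M.row := by
  have hcomb : ∀ {u u' : ι → V}, span R (Set.range u') ≤ span R (Set.range u) →
      ∃ M : Matrix ι ι R, u' = Fintype.linearCombination R u ∘ M.row := fun hle => by
    choose M hM using fun i =>
      (mem_span_range_iff_exists_fun R).mp (hle (subset_span ⟨i, rfl⟩))
    exact ⟨M, funext fun i => (hM i).symm⟩
  obtain ⟨M, rfl⟩ := hcomb h.ge
  obtain ⟨N, hN⟩ := hcomb h.le
  refine ⟨M, vecMul_surjective_iff_isUnit.mp fun c => ⟨c ᵥ* N, ?_⟩, rfl⟩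
  have hL := congrArg (Fintype.linearCombination R) hN
  rw [Fintype.linearCombination_comp_row, Fintype.linearCombination_comp_row,
    LinearMap.comp_assoc] at hL
  exact hw.fintypeLinearCombination_injective (LinearMap.congr_fun hL c).symm

end RowCombination

section AlgebraFamilies

variable {k A ι : Type*} [CommRing k] [Ring A] [Algebra k A] {u : ι → A} {c : A}

theorem LinearIndependent.mul_right [IsDomain A] (hu : LinearIndependent k u) (hc : c ≠ 0) :
    LinearIndependent k fun i => u i * c :=
  hu.map' (LinearMap.mulRight k c) (LinearMap.ker_eq_bot.mpr (mul_left_injective₀ hc))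

theorem span_range_mul_right (u : ι → A) (c : A) :
    span k (Set.range fun i => u i * c) = (span k (Set.range u)).map (LinearMap.mulRight k c) := by
  rw [Submodule.map_span, ← Set.range_comp]
  rfl

end AlgebraFamilies

namespace Matrix

variable {k A l m n o : Type*} [CommRing k] [CommRing A] [Algebra k A] [Fintype m] [Fintype n]

theorem map_algebraMap_mulVec (M : Matrix l m k) (u : m → A) :
    M.map (algebraMap k A) *ᵥ u = Fintype.linearCombination k u ∘ M.row := by
  ext i
  simp [mulVec, dotProduct, Fintype.linearCombination_apply, Algebra.smul_def]

theorem vecMul_map_algebraMap (v : n → A) (M : Matrix n o k) :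
    v ᵥ* M.map (algebraMap k A) = Fintype.linearCombination k v ∘ M.col := by
  ext j
  simp [vecMul, dotProduct, Fintype.linearCombination_apply, Algebra.smul_def, mul_comm]

theorem map_algebraMap_mul_vecMulVec_mul (Φ : Matrix l m k) (u : m → A) (v : n → A)
    (Ψ : Matrix n o k) :
    Φ.map (algebraMap k A) * vecMulVec u v * Ψ.map (algebraMap k A) =
      vecMulVec (Fintype.linearCombination k u ∘ Φ.row)
        (Fintype.linearCombination k v ∘ Ψ.col) := by
  rw [mul_vecMulVec, vecMulVec_mul, map_algebraMap_mulVec, vecMul_map_algebraMap]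

end Matrix

section RankOne

variable {m n : Type}

theorem minorsVanish_vecMulVec {R : Type} [CommRing R] (u : m → R) (v : n → R) :
    MinorsVanish (vecMulVec u v) := fun i i' j j' => by
  simp only [vecMulVec_apply]
  ring

theorem MinorsVanish.eq_vecMulVec {K : Type} [Field K] {X : Matrix m n K} (hX : MinorsVanish X)
    {i₀ : m} {j₀ : n} (h : X i₀ j₀ ≠ 0) :
    X = vecMulVec (fun i => X i j₀ * (X i₀ j₀)⁻¹) (X i₀) := by
  ext i j
  rw [vecMulVec_apply, mul_right_comm, ← div_eq_mul_inv, eq_div_iff h]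
  exact hX i i₀ j j₀

theorem kGeneral_vecMulVec {k A : Type} [Field k] [CommRing A] [IsDomain A] [Algebra k A]
    [Nonempty m] [Nonempty n] {u : m → A} {v : n → A} (hu : LinearIndependent k u)
    (hv : LinearIndependent k v) : KGeneral k (vecMulVec u v) := by
  obtain ⟨i⟩ := ‹Nonempty m›
  obtain ⟨j⟩ := ‹Nonempty n›
  refine ⟨⟨i, ?_⟩, j, hu.mul_right (hv.ne_zero j)⟩
  simp_rw [vecMulVec_apply, mul_comm (u i)]
  exact hv.mul_right (hu.ne_zero i)

end RankOne

section FiniteDimensional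

variable {K V ι : Type*} [Field K] [AddCommGroup V] [Module K V] [Fintype ι] {w : ι → V}
  {S : Submodule K V}

theorem LinearIndependent.fintype_card_le_finrank_of_forall_mem [FiniteDimensional K S]
    (hw : LinearIndependent K w) (hS : ∀ i, w i ∈ S) : Fintype.card ι ≤ finrank K S :=
  finrank_span_eq_card hw ▸ Submodule.finrank_mono (span_le.mpr (Set.range_subset_iff.mpr hS))

theorem LinearIndependent.span_eq_of_forall_mem [FiniteDimensional K S]
    (hw : LinearIndependent K w) (hS : ∀ i, w i ∈ S) (hcard : finrank K S = Fintype.card ι) :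
    span K (Set.range w) = S :=
  Submodule.eq_of_le_of_finrank_le (span_le.mpr (Set.range_subset_iff.mpr hS))
    (by rw [hcard, finrank_span_eq_card hw])

theorem exists_linearIndependent_span_eq [Module.Finite K S] {n : ℕ} (h : finrank K S = n) :
    ∃ w : Fin n → V, LinearIndependent K w ∧ span K (Set.range w) = S := by
  let b := Module.finBasisOfFinrankEq K S h
  refine ⟨S.subtype ∘ b, b.linearIndependent.map' S.subtype S.ker_subtype, ?_⟩
  rw [Set.range_comp, Submodule.span_image, b.span_eq, Submodule.map_subtype_top]

end FiniteDimensional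

theorem Quot.existsUnique_bijective_of_rel {α β : Type*} {r : α → α → Prop}
    {r' : β → β → Prop} {R : α → β → Prop} (hα : ∀ a, ∃ b, R a b) (hβ : ∀ b, ∃ a, R a b)
    (hr : ∀ {a a' b}, R a b → (R a' b ↔ r a a'))
    (hr' : ∀ {a b b'}, R a b → (R a b' ↔ r' b b')) :
    ∃! φ : Quot r → Quot r', Function.Bijective φ ∧
      ∀ a b, φ (Quot.mk r a) = Quot.mk r' b ↔ R a b := by
  choose f hf using hα
  have hequiv : Equivalence r' :=
    { refl := fun b => (hβ b).elim fun _ h => (hr' h).mp h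
      symm := fun {b b'} hbb' => (hβ b).elim fun _ h => (hr' ((hr' h).mpr hbb')).mp h
      trans := fun {b _ _} h₁ h₂ => (hβ b).elim fun _ h =>
        (hr' h).mp ((hr' ((hr' h).mpr h₁)).mpr h₂) }
  have hmk : ∀ a b, Quot.mk r' (f a) = Quot.mk r' b ↔ R a b := fun a b =>
    (hequiv.quot_mk_eq_iff _ _).trans (hr' (hf a)).symm
  refine ⟨Quot.lift (fun a => Quot.mk r' (f a))
      fun a a' h => ((hmk a' (f a)).mpr ((hr (hf a)).mpr h)).symm, ⟨⟨?_, ?_⟩, hmk⟩, ?_⟩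
  · rintro ⟨a⟩ ⟨a'⟩ h
    exact Quot.sound ((hr (hf a)).mp ((hmk a' (f a)).mp h.symm))
  · rintro ⟨b⟩
    obtain ⟨a, h⟩ := hβ b
    exact ⟨Quot.mk r a, (hmk a b).mpr h⟩
  · rintro ψ ⟨-, hψ⟩
    exact funext <| Quot.ind fun a => (hψ a (f a)).mpr (hf a)

namespace AbstractCurve

attribute [instance] finite_RR

variable {k : Type} [Field k] {C : AbstractCurve k}

section Divisors

theorem deg_add (A B : C.Point →₀ ℤ) : C.deg (A + B) = C.deg A + C.deg B :=
  Finsupp.sum_add_index' (fun _ => rfl) fun _ _ _ => rfl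

theorem deg_sub (A B : C.Point →₀ ℤ) : C.deg (A - B) = C.deg A - C.deg B :=
  Finsupp.sum_sub_index fun _ _ _ => rfl

theorem deg_single (p : C.Point) (m : ℤ) : C.deg (Finsupp.single p m) = m :=
  Finsupp.sum_single_index rfl

theorem deg_nonneg {A : C.Point →₀ ℤ} (hA : 0 ≤ A) : 0 ≤ C.deg A :=
  Finset.sum_nonneg fun p _ => hA p

theorem deg_divOf_eq_zero {f : C.F} (hf : f ≠ 0) : C.deg (C.divOf f) = 0 :=
  C.deg_divOf f hf

theorem divOf_inv {f : C.F} (hf : f ≠ 0) : C.divOf f⁻¹ = -C.divOf f := by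
  have h := C.divOf_mul f f⁻¹ hf (inv_ne_zero hf)
  rw [mul_inv_cancel₀ hf, ← map_one (algebraMap k C.F), C.divOf_algebraMap 1 one_ne_zero] at h
  exact (neg_eq_of_add_eq_zero_right h.symm).symm

end Divisors

section RiemannRochSpaces

theorem mem_RR_iff_of_ne_zero {D : C.Point →₀ ℤ} {f : C.F} (hf : f ≠ 0) :
    f ∈ C.RR D ↔ 0 ≤ C.divOf f + D := by
  rw [C.mem_RR, or_iff_right hf]

theorem RR_mono {A B : C.Point →₀ ℤ} (h : A ≤ B) : C.RR A ≤ C.RR B := fun f hf => by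
  rw [C.mem_RR] at hf ⊢
  exact hf.imp_right fun hA => hA.trans (add_le_add_right h _)

theorem RR_inf (A B : C.Point →₀ ℤ) : C.RR (A ⊓ B) = C.RR A ⊓ C.RR B := by
  refine le_antisymm (le_inf (RR_mono inf_le_left) (RR_mono inf_le_right)) fun f hf => ?_
  obtain ⟨hA, hB⟩ := Submodule.mem_inf.mp hf
  rcases eq_or_ne f 0 with rfl | hf
  · exact zero_mem _
  rw [mem_RR_iff_of_ne_zero hf] at hA hB ⊢
  rw [add_inf]
  exact le_inf hA hB

theorem RR_eq_bot_of_deg_neg {D : C.Point →₀ ℤ} (h : C.deg D < 0) : C.RR D = ⊥ := by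
  refine (Submodule.eq_bot_iff _).mpr fun f hf => by_contra fun hf0 => ?_
  have hdeg := deg_nonneg ((mem_RR_iff_of_ne_zero hf0).mp hf)
  rw [deg_add, deg_divOf_eq_zero hf0] at hdeg
  omega

theorem mul_mem_RR {A B : C.Point →₀ ℤ} {f g : C.F} (hf : f ∈ C.RR A) (hg : g ∈ C.RR B) :
    f * g ∈ C.RR (A + B) := by
  rcases eq_or_ne f 0 with rfl | hf0
  · simp
  rcases eq_or_ne g 0 with rfl | hg0
  · simp
  rw [mem_RR_iff_of_ne_zero hf0] at hf
  rw [mem_RR_iff_of_ne_zero hg0] at hg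
  rw [mem_RR_iff_of_ne_zero (mul_ne_zero hf0 hg0), C.divOf_mul f g hf0 hg0,
    add_add_add_comm]
  exact add_nonneg hf hg

theorem self_mem_RR_neg_divOf (f : C.F) : f ∈ C.RR (-C.divOf f) := by
  rcases eq_or_ne f 0 with rfl | hf
  · exact zero_mem _
  rw [mem_RR_iff_of_ne_zero hf, add_neg_cancel]

theorem map_mulRight_RR {f : C.F} (hf : f ≠ 0) (D : C.Point →₀ ℤ) :
    (C.RR D).map (LinearMap.mulRight k f) = C.RR (D - C.divOf f) := by
  refine le_antisymm (Submodule.map_le_iff_le_comap.mpr fun x hx => ?_)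
    fun y hy => ⟨y * f⁻¹, ?_, inv_mul_cancel_right₀ hf y⟩
  · simpa [sub_eq_add_neg] using mul_mem_RR hx (self_mem_RR_neg_divOf f)
  · simpa [divOf_inv hf] using mul_mem_RR hy (self_mem_RR_neg_divOf f⁻¹)

end RiemannRochSpaces

section RiemannRoch

theorem finrank_RR_eq {D : C.Point →₀ ℤ} (h : 2 * (C.genus : ℤ) - 2 < C.deg D) :
    (finrank k (C.RR D) : ℤ) = C.deg D - C.genus + 1 :=
  C.rank_RR D h

theorem finrank_RR_le_genus {E : C.Point →₀ ℤ} (hE : C.deg E ≤ 2 * C.genus - 2) :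
    finrank k (C.RR E) ≤ C.genus := by
  rcases lt_or_ge (C.deg E) 0 with hneg | hnonneg
  · rw [RR_eq_bot_of_deg_neg hneg, finrank_bot]
    exact Nat.zero_le _
  cases isEmpty_or_nonempty C.Point with
  | inl _ =>
    -- without points every divisor is `0`, so `L(E)` consists of constants
    have hconst : C.RR E ≤ LinearMap.range (Algebra.linearMap k C.F) := fun f _ => by
      rcases eq_or_ne f 0 with rfl | hf
      · exact zero_mem _
      obtain ⟨c, -, rfl⟩ := (C.divOf_eq_zero_iff f hf).mp (Subsingleton.elim _ _)
      exact ⟨c, rfl⟩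
    have h1 := (Submodule.finrank_mono hconst).trans
      ((LinearMap.finrank_range_le _).trans (finrank_self k).le)
    rw [Subsingleton.elim E 0] at hE
    have : C.deg 0 = 0 := Finsupp.sum_zero_index
    omega
  | inr hp =>
    obtain ⟨p⟩ := hp
    set A := E + Finsupp.single p (2 * C.genus - 1 - C.deg E)
    have hEA : E ≤ A := le_add_of_nonneg_right (Finsupp.single_nonneg.mpr (by omega))
    have hA : C.deg A = 2 * C.genus - 1 := by rw [deg_add, deg_single]; ring
    have h1 := finrank_RR_eq (C := C) (D := A) (by omega)
    have h2 := Submodule.finrank_mono (RR_mono hEA)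
    omega

theorem le_of_RR_eq {s : ℤ} (hs : 2 * (C.genus : ℤ) ≤ s) {D D' : C.Point →₀ ℤ}
    (hD : C.deg D = s) (hD' : C.deg D' = s) (h : C.RR D = C.RR D') : D ≤ D' := by
  by_contra hle
  obtain ⟨p, hp⟩ : ∃ p, D' p < D p := by simpa [Finsupp.le_def] using hle
  have hinf : D ⊓ D' ≤ D - Finsupp.single p 1 := fun q => by
    rcases eq_or_ne q p with rfl | hq
    · simp only [Finsupp.inf_apply, Finsupp.coe_sub, Pi.sub_apply, Finsupp.single_eq_same]
      omega
    · simp [Finsupp.single_eq_of_ne' hq.symm]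
  have hsub : C.RR D ≤ C.RR (D - Finsupp.single p 1) :=
    calc C.RR D = C.RR D ⊓ C.RR D' := by rw [h, inf_idem]
      _ = C.RR (D ⊓ D') := (RR_inf D D').symm
      _ ≤ _ := RR_mono hinf
  have h1 := finrank_RR_eq (C := C) (D := D) (by omega)
  have h2 := finrank_RR_eq (C := C) (D := D - Finsupp.single p 1)
    (by rw [deg_sub, deg_single]; omega)
  have h3 := Submodule.finrank_mono hsub
  rw [deg_sub, deg_single] at h2
  omega

theorem eq_of_RR_eq {s : ℤ} (hs : 2 * (C.genus : ℤ) ≤ s) {D D' : C.Point →₀ ℤ}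
    (hD : C.deg D = s) (hD' : C.deg D' = s) (h : C.RR D = C.RR D') : D = D' :=
  le_antisymm (le_of_RR_eq hs hD hD' h) (le_of_RR_eq hs hD' hD h.symm)

theorem deg_eq_of_le_finrank_RR {G D : C.Point →₀ ℤ} {s : ℤ} (hG : C.deg G = 2 * s)
    (hs : 2 * (C.genus : ℤ) ≤ s) (hD : s - C.genus + 1 ≤ (finrank k (C.RR D) : ℤ))
    (hGD : s - C.genus + 1 ≤ (finrank k (C.RR (G - D)) : ℤ)) : C.deg D = s := by
  have hdeg : ∀ E : C.Point →₀ ℤ, s - C.genus + 1 ≤ (finrank k (C.RR E) : ℤ) →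
      s ≤ C.deg E := fun E hE => by
    have hlarge : 2 * (C.genus : ℤ) - 2 < C.deg E := by
      by_contra! h
      have := finrank_RR_le_genus h
      omega
    have := finrank_RR_eq hlarge
    omega
  have h1 := hdeg D hD
  have h2 := hdeg (G - D) hGD
  rw [deg_sub] at h2
  omega

theorem exists_mem_RR_of_mul_mem_RR {ι κ : Type*} [Fintype ι] [Nonempty ι]
    {G : C.Point →₀ ℤ} {u : ι → C.F} {v : κ → C.F} (hu : ∀ i, u i ≠ 0) (hv : ∀ j, v j ≠ 0)
    (huv : ∀ i j, u i * v j ∈ C.RR G) :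
    ∃ D, (∀ i, u i ∈ C.RR D) ∧ ∀ j, v j ∈ C.RR (G - D) := by
  refine ⟨Finset.univ.sup' Finset.univ_nonempty fun i => -C.divOf (u i), fun i => ?_,
    fun j => ?_⟩
  · rw [mem_RR_iff_of_ne_zero (hu i), ← neg_le_iff_add_nonneg']
    exact Finset.le_sup' (fun i => -C.divOf (u i)) (Finset.mem_univ i)
  · rw [mem_RR_iff_of_ne_zero (hv j), add_sub, sub_nonneg]
    refine Finset.sup'_le _ _ fun i _ => ?_
    have h := (mem_RR_iff_of_ne_zero (mul_ne_zero (hu i) (hv j))).mp (huv i j)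
    rw [C.divOf_mul _ _ (hu i) (hv j), add_assoc] at h
    exact neg_le_iff_add_nonneg'.mpr h

end RiemannRoch

section Represents

variable {G D D' : C.Point →₀ ℤ} {s : ℤ} {n : ℕ} {X Y : Matrix (Fin n) (Fin n) C.F}

theorem Represents.represents_iff_kEquivalent (hX : C.Represents G D X) :
    C.Represents G D Y ↔ KEquivalent k X Y := by
  obtain ⟨u, v, hu, hsu, hv, hsv, hX⟩ := hX
  replace hX : X = vecMulVec u v := Matrix.ext hX
  subst hX
  constructor
  · rintro ⟨u', v', -, hsu', -, hsv', hY⟩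
    obtain ⟨M, hM, rfl⟩ := hu.exists_isUnit_eq_linearCombination_comp_row (hsu.trans hsu'.symm)
    obtain ⟨N, hN, rfl⟩ := hv.exists_isUnit_eq_linearCombination_comp_row (hsv.trans hsv'.symm)
    refine ⟨M, Nᵀ, isUnit_iff_isUnit_det M |>.mp hM, ?_, ?_⟩
    · rw [det_transpose, ← isUnit_iff_isUnit_det]
      exact hN
    · rw [map_algebraMap_mul_vecMulVec_mul, col_transpose]
      exact Matrix.ext hY
  · rintro ⟨Φ, Ψ, hΦ, hΨ, rfl⟩
    rw [← isUnit_iff_isUnit_det] at hΦ hΨ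
    rw [← isUnit_transpose] at hΨ
    refine ⟨_, _, hu.linearCombination_comp_row hΦ,
      (span_range_linearCombination_comp_row hΦ).trans hsu, hv.linearCombination_comp_row hΨ,
      (span_range_linearCombination_comp_row hΨ).trans hsv, fun i j => ?_⟩
    rw [map_algebraMap_mul_vecMulVec_mul]
    rfl

theorem Represents.represents_iff_linEquiv [NeZero n] (hs : 2 * (C.genus : ℤ) ≤ s)
    (hD : C.deg D = s) (hD' : C.deg D' = s) (hX : C.Represents G D X) :
    C.Represents G D' X ↔ C.LinEquiv D D' := by
  obtain ⟨u, v, hu, hsu, hv, hsv, hX⟩ := hX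
  constructor
  · rintro ⟨u', v', -, hsu', hv', -, hX'⟩
    set c := v 0 / v' 0
    have hc : c ≠ 0 := div_ne_zero (hv.ne_zero 0) (hv'.ne_zero 0)
    have hu' : u' = fun i => u i * c := funext fun i => by
      rw [mul_div, ← hX i 0, hX' i 0, mul_div_cancel_right₀ _ (hv'.ne_zero 0)]
    have hRR : C.RR (D - C.divOf c) = C.RR D' := by
      rw [← hsu', hu', span_range_mul_right, hsu, map_mulRight_RR hc]
    refine ⟨c⁻¹, inv_ne_zero hc, ?_⟩
    rw [divOf_inv hc, ← sub_eq_add_neg]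
    refine (eq_of_RR_eq hs ?_ hD' hRR).symm
    rw [deg_sub, deg_divOf_eq_zero hc, hD, sub_zero]
  · rintro ⟨f, hf, rfl⟩
    refine ⟨fun i => u i * f⁻¹, fun j => v j * f, hu.mul_right (inv_ne_zero hf), ?_,
      hv.mul_right hf, ?_, fun i j => ?_⟩
    · rw [span_range_mul_right, hsu, map_mulRight_RR (inv_ne_zero hf), divOf_inv hf,
        sub_neg_eq_add]
    · rw [span_range_mul_right, hsv, map_mulRight_RR hf, sub_add_eq_sub_sub]
    · rw [hX i j, mul_mul_mul_comm, inv_mul_cancel₀ hf, mul_one]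

theorem IsGForm.exists_represents (hG : C.deg G = 2 * s) (hs : 2 * (C.genus : ℤ) ≤ s)
    (hn : (n : ℤ) = s - C.genus + 1) (hX : C.IsGForm G X) :
    ∃ D, C.deg D = s ∧ C.Represents G D X := by
  obtain ⟨hmem, hminor, ⟨i₀, hrow⟩, j₀, hcol⟩ := hX
  have : Nonempty (Fin n) := ⟨i₀⟩
  set u := fun i => X i j₀ * (X i₀ j₀)⁻¹
  have hu : LinearIndependent k u := hcol.mul_right (inv_ne_zero (hrow.ne_zero j₀))
  have hXuv : ∀ i j, X i j = u i * X i₀ j := fun i j =>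
    congrFun (congrFun (hminor.eq_vecMulVec (hrow.ne_zero j₀)) i) j
  obtain ⟨D, huD, hvD⟩ := exists_mem_RR_of_mul_mem_RR hu.ne_zero hrow.ne_zero
    fun i j => hXuv i j ▸ hmem i j
  have hℓD := hu.fintype_card_le_finrank_of_forall_mem huD
  have hℓGD := hrow.fintype_card_le_finrank_of_forall_mem hvD
  rw [Fintype.card_fin] at hℓD hℓGD
  have hDs : C.deg D = s := deg_eq_of_le_finrank_RR hG hs (by omega) (by omega)
  have hGDs : C.deg (G - D) = s := by rw [deg_sub, hG, hDs]; ring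
  have e1 := finrank_RR_eq (C := C) (D := D) (by omega)
  have e2 := finrank_RR_eq (C := C) (D := G - D) (by omega)
  refine ⟨D, hDs, u, X i₀, hu, hu.span_eq_of_forall_mem huD ?_, hrow,
    hrow.span_eq_of_forall_mem hvD ?_, hXuv⟩ <;> rw [Fintype.card_fin] <;> omega

theorem exists_isGForm_represents (hG : C.deg G = 2 * s) (hs : 2 * (C.genus : ℤ) ≤ s)
    (hn : (n : ℤ) = s - C.genus + 1) (hD : C.deg D = s) :
    ∃ X : Matrix (Fin n) (Fin n) C.F, C.IsGForm G X ∧ C.Represents G D X := by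
  have : NeZero n := ⟨by omega⟩
  have hGD : C.deg (G - D) = s := by rw [deg_sub, hG, hD]; ring
  have e1 := finrank_RR_eq (C := C) (D := D) (by omega)
  have e2 := finrank_RR_eq (C := C) (D := G - D) (by omega)
  obtain ⟨u, hu, hsu⟩ := exists_linearIndependent_span_eq (K := k) (S := C.RR D) (n := n)
    (by omega)
  obtain ⟨v, hv, hsv⟩ := exists_linearIndependent_span_eq (K := k) (S := C.RR (G - D)) (n := n)
    (by omega)
  refine ⟨vecMulVec u v,
    ⟨fun i j => ?_, minorsVanish_vecMulVec u v, kGeneral_vecMulVec hu hv⟩,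
    u, v, hu, hsu, hv, hsv, fun _ _ => rfl⟩
  simpa only [vecMulVec_apply, add_sub_cancel] using
    mul_mem_RR (hsu ▸ subset_span ⟨i, rfl⟩ : u i ∈ C.RR D)
    (hsv ▸ subset_span ⟨j, rfl⟩ : v j ∈ C.RR (G - D))

end Represents

end AbstractCurve

open AbstractCurve in
theorem gform_divisor_correspondence_general (k : Type) [Field k]
    (C : AbstractCurve k) (G : C.Point →₀ ℤ) (s : ℤ)
    (hG : C.deg G = 2 * s) (hs : 2 * (C.genus : ℤ) ≤ s)
    (n : ℕ) (hn : (n : ℤ) = s - C.genus + 1) :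
    ∃! φ : Quot (C.GFormEquiv G n) → Quot (C.DivClassEquiv s),
      Function.Bijective φ ∧
        ∀ (X : {X : Matrix (Fin n) (Fin n) C.F // C.IsGForm G X})
          (D : {D : C.Point →₀ ℤ // C.deg D = s}),
          φ (Quot.mk (C.GFormEquiv G n) X) = Quot.mk (C.DivClassEquiv s) D ↔
            C.Represents G D.1 X.1 := by
  have : NeZero n := ⟨by omega⟩
  refine Quot.existsUnique_bijective_of_rel (fun X => ?_) (fun D => ?_)
    (fun hXD => hXD.represents_iff_kEquivalent)
    (fun {X D D'} hXD => hXD.represents_iff_linEquiv hs D.2 D'.2)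
  · obtain ⟨D, hD, hXD⟩ := X.2.exists_represents hG hs hn
    exact ⟨⟨D, hD⟩, hXD⟩
  · obtain ⟨X, hX, hXD⟩ := exists_isGForm_represents hG hs hn D.2
    exact ⟨⟨X, hX⟩, hXD⟩

open AbstractCurve in
/-- Let `G` be a divisor with `deg G = 2s` even and `s ≥ 2g`.  There
is a unique bijective correspondence between the set of `k`-equivalence classes of
`G`-forms and the set of divisor classes of degree `s = ½ deg G`, with respect to
which the class of a `G`-form `X` corresponds to the class of a divisor `D` if and
only if `X` represents `D`. -/
theorem gform_divisor_correspondence (k : Type) [Field k] [IsAlgClosed k]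
    (C : AbstractCurve k) (G : C.Point →₀ ℤ) (s : ℤ)
    (hG : C.deg G = 2 * s) (hs : 2 * (C.genus : ℤ) ≤ s)
    (n : ℕ) (hn : (n : ℤ) = s - C.genus + 1) :
    ∃! φ : Quot (C.GFormEquiv G n) → Quot (C.DivClassEquiv s),
      Function.Bijective φ ∧
        ∀ (X : {X : Matrix (Fin n) (Fin n) C.F // C.IsGForm G X})
          (D : {D : C.Point →₀ ℤ // C.deg D = s}),
          φ (Quot.mk (C.GFormEquiv G n) X) = Quot.mk (C.DivClassEquiv s) D ↔
            C.Represents G D.1 X.1 :=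
  gform_divisor_correspondence_general k C G s hG hs n hn
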